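/- (Proposition 1, stated entrywise.) Let (Ω, P) be a probability space, p ≥ 1, and let X, W : Ω → (Fin p → ℝ) be independent random vectors with square-integrable coordinates. Assume E[W_j] = 0 for all j, write Σ_{jk} = Cov(X_j, X_k) and Σ̂_{jk} = Cov(W_j, W_k), and let τ > 0. Define X⁽¹⁾ = X + τ·W and X⁽²⁾ = X − (1/τ)·W. Then for all coordinates j, k one has Cov(X⁽¹⁾_j, X⁽²⁾_k) = Σ_{jk} − Σ̂_{jk}. -/

import Mathlib

/-!
On square-integrable variables `cov` is Mathlib's bilinear `covariance`. Expanding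
`Cov(X + τW, X - τ⁻¹W)`, the cross terms `Cov(X, W)` and `Cov(W, X)` vanish by independence, and
the noise term carries the factor `τ · (-τ⁻¹) = -1`.
-/

open MeasureTheory ProbabilityTheory

noncomputable def cov {Ω : Type*} [MeasurableSpace Ω] (P : Measure Ω) (U V : Ω → ℝ) : ℝ :=
  (∫ ω, U ω * V ω ∂P) - (∫ ω, U ω ∂P) * (∫ ω, V ω ∂P)

section

variable {Ω : Type*} [MeasurableSpace Ω] {μ : Measure Ω}

lemma cov_eq_covariance [IsProbabilityMeasure μ] {U V : Ω → ℝ} (hU : MemLp U 2 μ)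
    (hV : MemLp V 2 μ) : cov μ U V = cov[U, V; μ] :=
  (covariance_eq_sub hU hV).symm

lemma covariance_add_smul_sub_inv_smul [IsFiniteMeasure μ] {X₁ X₂ W₁ W₂ : Ω → ℝ}
    (hX₁ : MemLp X₁ 2 μ) (hX₂ : MemLp X₂ 2 μ) (hW₁ : MemLp W₁ 2 μ) (hW₂ : MemLp W₂ 2 μ)
    (hX₁W₂ : IndepFun X₁ W₂ μ) (hW₁X₂ : IndepFun W₁ X₂ μ) {τ : ℝ} (hτ : τ ≠ 0) :
    cov[X₁ + τ • W₁, X₂ - τ⁻¹ • W₂; μ] = cov[X₁, X₂; μ] - cov[W₁, W₂; μ] := by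
  rw [covariance_add_left hX₁ (hW₁.const_smul τ) (hX₂.sub (hW₂.const_smul τ⁻¹)),
    covariance_sub_right hX₁ hX₂ (hW₂.const_smul τ⁻¹),
    covariance_sub_right (hW₁.const_smul τ) hX₂ (hW₂.const_smul τ⁻¹),
    covariance_smul_right, covariance_smul_left, covariance_smul_left, covariance_smul_right,
    hX₁W₂.covariance_eq_zero hX₁ hW₂, hW₁X₂.covariance_eq_zero hW₁ hX₂, mul_inv_cancel_left₀ hτ]
  ring

end

theorem data_fission_plugin_covariance_general
    {Ω : Type*} [MeasurableSpace Ω] (P : Measure Ω) [IsProbabilityMeasure P]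
    (p : ℕ) (X W : Ω → Fin p → ℝ)
    (hXW : IndepFun X W P)
    (hX2 : ∀ j, MemLp (fun ω => X ω j) 2 P)
    (hW2 : ∀ j, MemLp (fun ω => W ω j) 2 P)
    (Sig Sighat : Fin p → Fin p → ℝ)
    (hSig : ∀ j k, Sig j k = cov P (fun ω => X ω j) (fun ω => X ω k))
    (hSighat : ∀ j k, Sighat j k = cov P (fun ω => W ω j) (fun ω => W ω k))
    (τ : ℝ) (hτ : 0 < τ) :
    ∀ j k, cov P (fun ω => X ω j + τ * W ω j) (fun ω => X ω k - (1 / τ) * W ω k)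
      = Sig j k - Sighat j k := by
  intro j k
  have hfission := covariance_add_smul_sub_inv_smul (hX2 j) (hX2 k) (hW2 j) (hW2 k)
    (hXW.comp (measurable_pi_apply j) (measurable_pi_apply k))
    (hXW.symm.comp (measurable_pi_apply j) (measurable_pi_apply k)) hτ.ne'
  rw [hSig, hSighat, cov_eq_covariance (hX2 j) (hX2 k), cov_eq_covariance (hW2 j) (hW2 k),
    ← hfission, one_div]
  exact cov_eq_covariance ((hX2 j).add ((hW2 j).const_smul τ))
    ((hX2 k).sub ((hW2 k).const_smul τ⁻¹))

/-- Proposition 1, stated entrywise: fission with a plug-in noise covariance `Σ̂`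
induces covariance `Σ - Σ̂` between the two fissioned parts. -/
theorem data_fission_plugin_covariance
    {Ω : Type*} [MeasurableSpace Ω] (P : Measure Ω) [IsProbabilityMeasure P]
    (p : ℕ) (hp : 1 ≤ p) (X W : Ω → Fin p → ℝ)
    (hX : Measurable X) (hW : Measurable W)
    (hXW : IndepFun X W P)
    (hX2 : ∀ j, MemLp (fun ω => X ω j) 2 P)
    (hW2 : ∀ j, MemLp (fun ω => W ω j) 2 P)
    (hWmean : ∀ j, (∫ ω, W ω j ∂P) = 0)
    (Sig Sighat : Fin p → Fin p → ℝ)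
    (hSig : ∀ j k, Sig j k = cov P (fun ω => X ω j) (fun ω => X ω k))
    (hSighat : ∀ j k, Sighat j k = cov P (fun ω => W ω j) (fun ω => W ω k))
    (τ : ℝ) (hτ : 0 < τ) :
    ∀ j k, cov P (fun ω => X ω j + τ * W ω j) (fun ω => X ω k - (1 / τ) * W ω k)
      = Sig j k - Sighat j k :=
  data_fission_plugin_covariance_general P p X W hXW hX2 hW2 Sig Sighat hSig hSighat τ hτ
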